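/- arXiv:0907.0518 — 4 statements merged into one kernel-verified Lean document; each statement's English description precedes it below -/
import Mathlib

section
/- For every δ > 0 there exists ε > 0 with the following property. Let u : ℝ² → ℝ be twice continuously differentiable and suppose that for every x ∈ ℝ² with |x| ≤ 3/2 one has |u(x)| + ‖Du(x)‖ + ‖D²u(x)‖ ≤ ε. Let Σ = {(x, u(x)) : x ∈ ℝ², |x| ≤ 3/2} ⊂ ℝ³. Suppose γ : [0,1] → ℝ³ is a continuous path with image contained in Σ, of finite length, whose length equals the intrinsic distance d_Σ(γ(0), γ(1)); suppose the orthogonal projections of γ(0) and γ(1) to ℝ² both have norm exactly 1, and that the image of γ meets the open Euclidean ball of radius ε centered at the origin of ℝ³. Then there exists a one-dimensional linear subspace L ⊂ ℝ² such that the Hausdorff distance in ℝ³ between the image of γ and the set {(x, 0) : x ∈ L, |x| ≤ 1} is less than δ. -/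
open scoped ENNReal

noncomputable section

/-- Euclidean plane ℝ². -/
abbrev E2 : Type := EuclideanSpace ℝ (Fin 2)

/-- Euclidean space ℝ³, written as pairs (x, y) with x ∈ ℝ² and y ∈ ℝ, with the ℓ²
(Euclidean) norm on the product. -/
abbrev R3 : Type := WithLp 2 (E2 × ℝ)

/-- Orthogonal projection ℝ³ → ℝ², (x, y) ↦ x. -/
def proj1 (p : R3) : E2 := (WithLp.equiv 2 (E2 × ℝ) p).1

/-- Projection onto the last coordinate, (x, y) ↦ y. -/
def proj2 (p : R3) : ℝ := (WithLp.equiv 2 (E2 × ℝ) p).2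

/-- The point (x, y) ∈ ℝ³. -/
def mk3 (x : E2) (y : ℝ) : R3 := (WithLp.equiv 2 (E2 × ℝ)).symm (x, y)

/-- The intrinsic distance in a subset `S` of ℝ³: the infimum of the lengths (total
variations) of continuous paths in `S` joining `p` to `q`. -/
def intrinsicDist (S : Set R3) (p q : R3) : ℝ≥0∞ :=
  ⨅ γ ∈ {γ : ℝ → R3 | ContinuousOn γ (Set.Icc 0 1) ∧ Set.MapsTo γ (Set.Icc 0 1) S ∧
      γ 0 = p ∧ γ 1 = q},
    eVariationOn γ (Set.Icc 0 1)

/-!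
Write `x s` for the projection of `γ s` to ℝ² and `a`, `b` for the projected endpoints. Lifting the
chord `[a, b]` to the graph gives a competitor of length at most `(1 + ε) ‖b - a‖`, so minimality
and the triangle inequality put every `x s` in the ellipse `‖x - a‖ + ‖x - b‖ ≤ (1 + ε) ‖b - a‖`.
Since the path passes within `ε` of the origin, `‖b - a‖ ≥ 2 - O(ε)`, so `b` is `O(√ε)`-close to
`-a` and the ellipse is a thin one around the diameter through `a`. The vertical coordinate is at
most `ε`, and the whole diameter is swept out, by the intermediate value theorem applied to
`⟪x s, a⟫`, which runs from `1` to about `-1`.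
-/

open scoped NNReal RealInnerProductSpace
open Set Metric

@[simp] lemma proj1_mk3 (x : E2) (y : ℝ) : proj1 (mk3 x y) = x := rfl

@[simp] lemma proj2_mk3 (x : E2) (y : ℝ) : proj2 (mk3 x y) = y := rfl

lemma dist_proj1_le (p q : R3) : dist (proj1 p) (proj1 q) ≤ dist p q := WithLp.dist_fst_le p q

lemma lipschitzWith_proj1 : LipschitzWith 1 proj1 :=
  LipschitzWith.of_dist_le_mul fun p q ↦ by simpa using dist_proj1_le p q

lemma norm_proj1_le (p : R3) : ‖proj1 p‖ ≤ ‖p‖ := WithLp.norm_fst_le (x := p)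

lemma dist_le_norm_proj1_sub_add_abs_proj2_sub (p q : R3) :
    dist p q ≤ ‖proj1 p - proj1 q‖ + |proj2 p - proj2 q| := by
  have h := WithLp.prod_norm_sq_eq_of_L2 (p - q)
  rw [dist_eq_norm]
  refine le_of_sq_le_sq ?_ (by positivity)
  simp only [WithLp.sub_fst, WithLp.sub_snd, Real.norm_eq_abs] at h
  change ‖p - q‖ ^ 2 = ‖proj1 p - proj1 q‖ ^ 2 + |proj2 p - proj2 q| ^ 2 at h
  nlinarith [norm_nonneg (proj1 p - proj1 q), abs_nonneg (proj2 p - proj2 q)]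

lemma edist_add_edist_le_eVariationOn {E : Type*} [PseudoEMetricSpace E] (f : ℝ → E)
    {a b s : ℝ} (hs : s ∈ Icc a b) :
    edist (f a) (f s) + edist (f s) (f b) ≤ eVariationOn f (Icc a b) :=
  calc edist (f a) (f s) + edist (f s) (f b)
      ≤ eVariationOn f (Icc a s) + eVariationOn f (Icc s b) :=
        add_le_add (eVariationOn.edist_le f ⟨le_rfl, hs.1⟩ ⟨hs.1, le_rfl⟩)
          (eVariationOn.edist_le f ⟨le_rfl, hs.2⟩ ⟨hs.2, le_rfl⟩)
    _ = eVariationOn f (Icc a b) := by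
        rw [← eVariationOn.union f (isGreatest_Icc hs.1) (isLeast_Icc hs.2),
          Icc_union_Icc_eq_Icc hs.1 hs.2]

lemma LipschitzOnWith.eVariationOn_Icc_le {E : Type*} [PseudoEMetricSpace E] {f : ℝ → E}
    {K : ℝ≥0} {a b : ℝ} (hf : LipschitzOnWith K f (Icc a b)) :
    eVariationOn f (Icc a b) ≤ K * ENNReal.ofReal (b - a) := by
  simpa using hf.comp_eVariationOn_le (g := id) (mapsTo_id _)

lemma intrinsicDist_graph_le {u : E2 → ℝ} {R : ℝ} {K : ℝ≥0}
    (hu : LipschitzOnWith K u (closedBall 0 R)) {x y : E2} (hx : ‖x‖ ≤ R) (hy : ‖y‖ ≤ R) :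
    intrinsicDist {p : R3 | ∃ x : E2, ‖x‖ ≤ R ∧ p = mk3 x (u x)} (mk3 x (u x)) (mk3 y (u y)) ≤
      (1 + K) * edist x y := by
  set g : ℝ → E2 := ⇑(AffineMap.lineMap (k := ℝ) x y)
  have hg : MapsTo g (Icc 0 1) (closedBall 0 R) := fun t ht ↦
    (convex_closedBall (0 : E2) R).lineMap_mem (by simpa using hx) (by simpa using hy) ht
  have hlift : LipschitzOnWith (1 + K) (fun z ↦ mk3 z (u z)) (closedBall 0 R) := by
    refine LipschitzOnWith.of_dist_le_mul fun z hz w hw ↦ ?_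
    have huzw := hu.dist_le_mul z hz w hw
    rw [Real.dist_eq] at huzw
    calc dist (mk3 z (u z)) (mk3 w (u w)) ≤ ‖z - w‖ + |u z - u w| :=
          dist_le_norm_proj1_sub_add_abs_proj2_sub _ _
      _ ≤ ↑(1 + K) * dist z w := by rw [← dist_eq_norm]; push_cast; linarith
  have hpath : LipschitzOnWith ((1 + K) * nndist x y) (fun t ↦ mk3 (g t) (u (g t))) (Icc 0 1) :=
    hlift.comp ((lipschitzWith_lineMap x y).lipschitzOnWith) hg
  refine (iInf₂_le _ ⟨hpath.continuousOn, fun t ht ↦ ⟨g t, by simpa using hg ht, rfl⟩,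
    by simp [g], by simp [g]⟩).trans ?_
  refine hpath.eVariationOn_Icc_le.trans_eq ?_
  simp

section InnerProductSpace

variable {F : Type*} [NormedAddCommGroup F] [InnerProductSpace ℝ F] {a : F}

def NearDiameter {ι : Type*} (c : ι → F) (S : Set ι) (a : F) (r : ℝ) : Prop :=
  (∀ s ∈ S, ∃ t : ℝ, |t| ≤ 1 ∧ ‖c s - t • a‖ ≤ r) ∧ ∀ t : ℝ, |t| ≤ 1 → ∃ s ∈ S, ‖c s - t • a‖ ≤ r

lemma norm_sub_smul_sq_of_norm_eq_one (ha : ‖a‖ = 1) (x : F) (r : ℝ) :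
    ‖x - r • a‖ ^ 2 = (⟪x, a⟫ - r) ^ 2 + ‖x - ⟪x, a⟫ • a‖ ^ 2 := by
  simp only [norm_sub_sq_real, real_inner_smul_right, norm_smul, ha, Real.norm_eq_abs, mul_pow,
    sq_abs]
  ring

-- `‖x ∓ a‖² = (1 ∓ t)² + w²`, and `√(p² + w²) √(q² + w²) ≥ |pq| + w²` by Cauchy–Schwarz.
lemma four_mul_one_add_sq_norm_sub_inner_smul_le (ha : ‖a‖ = 1) (x : F) :
    4 * (1 + ‖x - ⟪x, a⟫ • a‖ ^ 2) ≤ (‖x - a‖ + ‖x + a‖) ^ 2 := by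
  set t := ⟪x, a⟫
  set w := ‖x - t • a‖
  have hA : ‖x - a‖ ^ 2 = (t - 1) ^ 2 + w ^ 2 := by
    simpa using norm_sub_smul_sq_of_norm_eq_one ha x 1
  have hB : ‖x + a‖ ^ 2 = (t + 1) ^ 2 + w ^ 2 := by
    simpa using norm_sub_smul_sq_of_norm_eq_one ha x (-1)
  have habs : |1 - t ^ 2| ≤ 1 + t ^ 2 := abs_le.2 ⟨by nlinarith, by nlinarith⟩
  have hAB : |1 - t ^ 2| + w ^ 2 ≤ ‖x - a‖ * ‖x + a‖ := by
    refine le_of_sq_le_sq ?_ (by positivity)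
    rw [mul_pow, hA, hB]
    nlinarith [sq_abs (1 - t ^ 2), sq_nonneg w]
  nlinarith [le_abs_self (1 - t ^ 2)]

lemma norm_sub_inner_smul_le_of_norm_sub_add_norm_add_le (ha : ‖a‖ = 1) {x : F} {κ : ℝ}
    (hκ0 : 0 ≤ κ) (hκ2 : κ ≤ 2) (hx : ‖x - a‖ + ‖x + a‖ ≤ 2 + κ ^ 2 / 2) :
    ‖x - ⟪x, a⟫ • a‖ ≤ κ := by
  have h := four_mul_one_add_sq_norm_sub_inner_smul_le ha x
  have hx2 : (‖x - a‖ + ‖x + a‖) ^ 2 ≤ (2 + κ ^ 2 / 2) ^ 2 := pow_le_pow_left₀ (by positivity) hx 2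
  refine le_of_sq_le_sq ?_ hκ0
  nlinarith [mul_le_mul_of_nonneg_left (pow_le_pow_left₀ hκ0 hκ2 2) (sq_nonneg κ)]

lemma inner_add_one_le_norm_add (ha : ‖a‖ = 1) (x : F) : ⟪x, a⟫ + 1 ≤ ‖x + a‖ := by
  simpa [inner_add_left, real_inner_self_eq_norm_sq, ha] using real_inner_le_norm (x + a) a

lemma exists_abs_le_one_norm_sub_smul_le (ha : ‖a‖ = 1) {x : F} {κ : ℝ} (hκ0 : 0 ≤ κ)
    (hκ2 : κ ≤ 2) (hx : ‖x - a‖ + ‖x + a‖ ≤ 2 + κ ^ 2 / 2) :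
    ∃ r : ℝ, |r| ≤ 1 ∧ ‖x - r • a‖ ≤ κ := by
  have hκ : κ ^ 2 / 2 ≤ κ := by nlinarith
  rcases le_or_gt ⟪x, a⟫ 1 with h1 | h1
  · rcases le_or_gt (-1) ⟪x, a⟫ with h2 | h2
    · exact ⟨⟪x, a⟫, abs_le.2 ⟨h2, h1⟩,
        norm_sub_inner_smul_le_of_norm_sub_add_norm_add_le ha hκ0 hκ2 hx⟩
    · refine ⟨-1, by norm_num, ?_⟩
      have := inner_add_one_le_norm_add ha (-x)
      rw [inner_neg_left, neg_add_eq_sub, neg_add_eq_sub, norm_sub_rev] at this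
      simp only [neg_smul, one_smul, sub_neg_eq_add]
      linarith
  · refine ⟨1, by norm_num, ?_⟩
    have := inner_add_one_le_norm_add ha x
    rw [one_smul]
    linarith

lemma exists_mem_Icc_norm_sub_smul_le (ha : ‖a‖ = 1) {c : ℝ → F}
    (hc : ContinuousOn c (Icc 0 1)) (hc0 : c 0 = a) {κ ρ : ℝ} (hκ0 : 0 ≤ κ) (hκ2 : κ ≤ 2)
    (hell : ∀ s ∈ Icc (0 : ℝ) 1, ‖c s - a‖ + ‖c s + a‖ ≤ 2 + κ ^ 2 / 2)
    (hc1 : ‖c 1 + a‖ ≤ ρ) {r : ℝ} (hr : |r| ≤ 1) :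
    ∃ s ∈ Icc (0 : ℝ) 1, ‖c s - r • a‖ ≤ κ + 2 * ρ := by
  have hρ : 0 ≤ ρ := (norm_nonneg _).trans hc1
  obtain ⟨hr₁, hr₂⟩ := abs_le.1 hr
  rcases le_or_gt ⟪c 1, a⟫ r with h1 | h1
  · have h0 : ⟪c 0, a⟫ = 1 := by simp [hc0, ha]
    obtain ⟨s, hs, hsr⟩ := intermediate_value_Icc' zero_le_one (hc.inner continuousOn_const)
      ⟨h1, h0 ▸ hr₂⟩
    refine ⟨s, hs, ?_⟩
    rw [← hsr]
    linarith [norm_sub_inner_smul_le_of_norm_sub_add_norm_add_le ha hκ0 hκ2 (hell s hs)]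
  · refine ⟨1, right_mem_Icc.2 zero_le_one, ?_⟩
    have := inner_add_one_le_norm_add ha (c 1)
    calc ‖c 1 - r • a‖ = ‖(c 1 + a) - (1 + r) • a‖ := by congr 1; module
      _ ≤ ‖c 1 + a‖ + ‖(1 + r) • a‖ := norm_sub_le _ _
      _ = ‖c 1 + a‖ + (1 + r) := by
          rw [norm_smul, ha, mul_one, Real.norm_of_nonneg (by linarith)]
      _ ≤ κ + 2 * ρ := by linarith

lemma sq_norm_add_le_of_norm_sub_add_norm_sub_le {b x : F} (ha : ‖a‖ = 1) (hb : ‖b‖ = 1)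
    {η : ℝ} (hη : 0 ≤ η) (hx : ‖x‖ ≤ η) (h : ‖x - a‖ + ‖x - b‖ ≤ (1 + η) * ‖b - a‖) :
    ‖a + b‖ ^ 2 ≤ 16 * η := by
  have hxa := norm_sub_norm_le a x
  have hxb := norm_sub_norm_le b x
  rw [norm_sub_rev] at hxa hxb
  have hlen : 2 - 2 * η ≤ (1 + η) * ‖b - a‖ := by linarith
  have hpar : ‖a + b‖ ^ 2 + ‖b - a‖ ^ 2 = 4 := by
    have := parallelogram_law_with_norm ℝ a b
    rw [norm_sub_rev, ha, hb] at this
    nlinarith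
  rcases le_or_gt 1 η with h1 | h1
  · nlinarith [sq_nonneg ‖b - a‖]
  · have h2 : (2 - 2 * η) ^ 2 ≤ ((1 + η) * ‖b - a‖) ^ 2 := pow_le_pow_left₀ (by linarith) hlen 2
    nlinarith [mul_nonneg (sq_nonneg ‖a + b‖) hη, mul_nonneg (sq_nonneg ‖a + b‖) (sq_nonneg η)]

lemma nearDiameter_of_norm_sub_add_norm_sub_le {c : ℝ → F} (hc : ContinuousOn c (Icc 0 1))
    (h0 : ‖c 0‖ = 1) (h1 : ‖c 1‖ = 1) {q : ℝ} (hq0 : 0 ≤ q) (hq1 : 16 * q ≤ 1) {t₀ : ℝ}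
    (ht₀ : t₀ ∈ Icc (0 : ℝ) 1) (hct₀ : ‖c t₀‖ ≤ q ^ 4)
    (hsum : ∀ s ∈ Icc (0 : ℝ) 1, ‖c s - c 0‖ + ‖c s - c 1‖ ≤ (1 + q ^ 4) * ‖c 1 - c 0‖) :
    NearDiameter c (Icc 0 1) (c 0) (5 * q) := by
  have hq2 : q ^ 2 ≤ q := by nlinarith
  have hq4 : q ^ 4 ≤ q ^ 2 := by nlinarith
  have hab : ‖c 0 + c 1‖ ≤ 4 * q ^ 2 := by
    refine le_of_sq_le_sq ?_ (by positivity)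
    nlinarith [sq_norm_add_le_of_norm_sub_add_norm_sub_le h0 h1 (by positivity) hct₀
      (hsum t₀ ht₀)]
  have hell (s : ℝ) (hs : s ∈ Icc (0 : ℝ) 1) :
      ‖c s - c 0‖ + ‖c s + c 0‖ ≤ 2 + (4 * q) ^ 2 / 2 := by
    have htri : ‖c s + c 0‖ ≤ ‖c s - c 1‖ + ‖c 0 + c 1‖ :=
      (congrArg norm (by abel)).trans_le (norm_add_le (c s - c 1) (c 0 + c 1))
    have hlen : ‖c 1 - c 0‖ ≤ 2 := (norm_sub_le _ _).trans (by rw [h0, h1]; norm_num)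
    nlinarith [hsum s hs, mul_le_mul_of_nonneg_left hlen (by positivity : (0 : ℝ) ≤ 1 + q ^ 4)]
  have hκ : 4 * q ≤ 2 := by linarith
  refine ⟨fun s hs ↦ ?_, fun t ht ↦ ?_⟩
  · obtain ⟨t, ht, h⟩ := exists_abs_le_one_norm_sub_smul_le h0 (by positivity) hκ (hell s hs)
    exact ⟨t, ht, h.trans (by linarith)⟩
  · obtain ⟨s, hs, h⟩ := exists_mem_Icc_norm_sub_smul_le h0 hc rfl (by positivity) hκ hell
      (ρ := 4 * q ^ 2) (by rwa [add_comm]) ht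
    exact ⟨s, hs, h.trans (by nlinarith)⟩

end InnerProductSpace

lemma norm_sub_add_norm_sub_le_of_eVariationOn_eq_intrinsicDist {u : E2 → ℝ} {R : ℝ} {K : ℝ≥0}
    (hu : LipschitzOnWith K u (closedBall 0 R)) {γ : ℝ → R3}
    (hγ : MapsTo γ (Icc 0 1) {p : R3 | ∃ x : E2, ‖x‖ ≤ R ∧ p = mk3 x (u x)})
    (hmin : eVariationOn γ (Icc 0 1) =
      intrinsicDist {p : R3 | ∃ x : E2, ‖x‖ ≤ R ∧ p = mk3 x (u x)} (γ 0) (γ 1))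
    {s : ℝ} (hs : s ∈ Icc (0 : ℝ) 1) :
    ‖proj1 (γ s) - proj1 (γ 0)‖ + ‖proj1 (γ s) - proj1 (γ 1)‖ ≤
      (1 + K) * ‖proj1 (γ 1) - proj1 (γ 0)‖ := by
  obtain ⟨x, hx, hγ0⟩ := hγ (left_mem_Icc.2 zero_le_one)
  obtain ⟨y, hy, hγ1⟩ := hγ (right_mem_Icc.2 zero_le_one)
  have hlen : edist (γ 0) (γ s) + edist (γ s) (γ 1) ≤ (1 + K) * edist x y :=
    calc edist (γ 0) (γ s) + edist (γ s) (γ 1) ≤ eVariationOn γ (Icc 0 1) :=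
          edist_add_edist_le_eVariationOn γ hs
      _ = _ := hmin
      _ ≤ _ := by rw [hγ0, hγ1]; exact intrinsicDist_graph_le hu hx hy
  have hlen' : dist (γ 0) (γ s) + dist (γ s) (γ 1) ≤ (1 + K) * dist x y := by
    have := ENNReal.toReal_mono (by finiteness) hlen
    simpa [ENNReal.toReal_add, ENNReal.toReal_mul, ← dist_edist] using this
  have hx0 : proj1 (γ 0) = x := by rw [hγ0]; rfl
  have hy1 : proj1 (γ 1) = y := by rw [hγ1]; rfl
  calc ‖proj1 (γ s) - proj1 (γ 0)‖ + ‖proj1 (γ s) - proj1 (γ 1)‖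
      = dist (proj1 (γ 0)) (proj1 (γ s)) + dist (proj1 (γ s)) (proj1 (γ 1)) := by
        rw [dist_comm, dist_eq_norm, dist_eq_norm]
    _ ≤ dist (γ 0) (γ s) + dist (γ s) (γ 1) := add_le_add (dist_proj1_le _ _) (dist_proj1_le _ _)
    _ ≤ (1 + K) * dist x y := hlen'
    _ = (1 + K) * ‖proj1 (γ 1) - proj1 (γ 0)‖ := by rw [hx0, hy1, dist_comm, dist_eq_norm]

lemma hausdorffDist_image_segment_le {ι : Type*} {γ : ι → R3} {S : Set ι} {a : E2}
    (ha : ‖a‖ = 1) {r ε : ℝ} (hr : 0 ≤ r) (hε : 0 ≤ ε) (hvert : ∀ s ∈ S, |proj2 (γ s)| ≤ ε)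
    (hnear : NearDiameter (proj1 ∘ γ) S a r) :
    hausdorffDist (γ '' S) {p : R3 | proj1 p ∈ ℝ ∙ a ∧ ‖proj1 p‖ ≤ 1 ∧ proj2 p = 0} ≤
      r + ε := by
  refine hausdorffDist_le_of_mem_dist (by positivity) ?_ ?_
  · rintro _ ⟨s, hs, rfl⟩
    obtain ⟨t, ht, hst⟩ := hnear.1 s hs
    refine ⟨mk3 (t • a) 0, ⟨Submodule.smul_mem _ t (Submodule.mem_span_singleton_self a),
      by simpa [norm_smul, ha] using ht, rfl⟩, ?_⟩
    calc dist (γ s) (mk3 (t • a) 0)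
        ≤ ‖proj1 (γ s) - t • a‖ + |proj2 (γ s) - 0| := dist_le_norm_proj1_sub_add_abs_proj2_sub _ _
      _ ≤ r + ε := by rw [sub_zero]; exact add_le_add hst (hvert s hs)
  · rintro p ⟨hpL, hp1, hp2⟩
    obtain ⟨t, ht⟩ := Submodule.mem_span_singleton.1 hpL
    obtain ⟨s, hs, hst⟩ := hnear.2 t (by simpa [← ht, norm_smul, ha] using hp1)
    refine ⟨γ s, mem_image_of_mem γ hs, ?_⟩
    calc dist p (γ s) = dist (γ s) p := dist_comm _ _
      _ ≤ ‖proj1 (γ s) - proj1 p‖ + |proj2 (γ s) - proj2 p| :=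
          dist_le_norm_proj1_sub_add_abs_proj2_sub _ _
      _ ≤ r + ε := by rw [← ht, hp2, sub_zero]; exact add_le_add hst (hvert s hs)

/-- Lemma 2.3: minimizing geodesics in almost flat graphs are almost straight.  For every
`δ > 0` there is `ε > 0` so that if `u` is `C²` with `|u| + ‖Du‖ + ‖D²u‖ ≤ ε` on the disk of
radius 3/2, `Σ` is the graph of `u` over that disk, and `γ` is a finite-length path in `Σ`
whose length realizes the intrinsic distance between its endpoints, whose endpoints project
to the unit circle of ℝ², and which meets the open ball of radius `ε` about the origin, then
the image of `γ` is `δ`-Hausdorff close to `L ∩ D₁(0)` for some line `L` through the origin. -/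
theorem stmt_1 (δ : ℝ) (hδ : 0 < δ) :
    ∃ ε : ℝ, 0 < ε ∧
      ∀ u : E2 → ℝ, ContDiff ℝ 2 u →
        (∀ x : E2, ‖x‖ ≤ 3 / 2 →
          |u x| + ‖fderiv ℝ u x‖ + ‖iteratedFDeriv ℝ 2 u x‖ ≤ ε) →
        ∀ γ : ℝ → R3,
          ContinuousOn γ (Set.Icc 0 1) →
          Set.MapsTo γ (Set.Icc 0 1) {p : R3 | ∃ x : E2, ‖x‖ ≤ 3 / 2 ∧ p = mk3 x (u x)} →
          eVariationOn γ (Set.Icc 0 1) ≠ ⊤ →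
          eVariationOn γ (Set.Icc 0 1) =
            intrinsicDist {p : R3 | ∃ x : E2, ‖x‖ ≤ 3 / 2 ∧ p = mk3 x (u x)} (γ 0) (γ 1) →
          ‖proj1 (γ 0)‖ = 1 → ‖proj1 (γ 1)‖ = 1 →
          (∃ t ∈ Set.Icc (0 : ℝ) 1, ‖γ t‖ < ε) →
          ∃ L : Submodule ℝ E2, Module.finrank ℝ L = 1 ∧
            Metric.hausdorffDist (γ '' Set.Icc 0 1)
              {p : R3 | proj1 p ∈ L ∧ ‖proj1 p‖ ≤ 1 ∧ proj2 p = 0} < δ := by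
  set q := min δ 1 / 16
  have hq0 : 0 < q := by positivity
  have hqδ : 16 * q ≤ δ := by simp only [q]; linarith [min_le_left δ 1]
  have hq1 : 16 * q ≤ 1 := by simp only [q]; linarith [min_le_right δ 1]
  refine ⟨q ^ 4, by positivity, fun u hu hbound γ hγc hγm _ hmin ha hb ⟨t₀, ht₀, ht₀ε⟩ ↦ ?_⟩
  have hlip : LipschitzOnWith (q ^ 4).toNNReal u (closedBall 0 (3 / 2)) := by
    refine (convex_closedBall _ _).lipschitzOnWith_of_nnnorm_fderiv_le
      (fun x _ ↦ (hu.differentiable (by norm_num)).differentiableAt) fun x hx ↦ ?_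
    rw [← NNReal.coe_le_coe, coe_nnnorm, Real.coe_toNNReal _ (by positivity)]
    linarith [hbound x (mem_closedBall_zero_iff.1 hx), abs_nonneg (u x),
      norm_nonneg (iteratedFDeriv ℝ 2 u x)]
  have hvert (s : ℝ) (hs : s ∈ Icc (0 : ℝ) 1) : |proj2 (γ s)| ≤ q ^ 4 := by
    obtain ⟨x, hx, hγs⟩ := hγm hs
    rw [hγs, proj2_mk3]
    linarith [hbound x hx, norm_nonneg (fderiv ℝ u x), norm_nonneg (iteratedFDeriv ℝ 2 u x)]
  have hnear : NearDiameter (proj1 ∘ γ) (Icc 0 1) (proj1 (γ 0)) (5 * q) :=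
    nearDiameter_of_norm_sub_add_norm_sub_le
      (lipschitzWith_proj1.continuous.comp_continuousOn hγc) ha hb hq0.le hq1 ht₀
      ((norm_proj1_le _).trans ht₀ε.le) fun s hs ↦ by
        simpa [Real.coe_toNNReal _ (by positivity : 0 ≤ q ^ 4)] using
          norm_sub_add_norm_sub_le_of_eVariationOn_eq_intrinsicDist hlip hγm hmin hs
  refine ⟨ℝ ∙ proj1 (γ 0), finrank_span_singleton (norm_ne_zero_iff.1 (ha ▸ one_ne_zero)), ?_⟩
  refine (hausdorffDist_image_segment_le ha (by positivity) (by positivity) hvert hnear).trans_lt ?_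
  linarith [pow_le_of_le_one hq0.le (by linarith : q ≤ 1) (by norm_num : 4 ≠ 0)]

end
end

section
/- Let λ > 0, C ≥ 1, and C₀ > 0. Then there exists C₂ > 0, depending only on λ, C, and C₀, with the following property: for every continuous function F : ℝ → ℂ and every a ∈ ℂ with |a| ≤ C₀ such that |F(t)| ≤ 1/2 and |F(t) − a/t| ≤ C₀/t² for all t ≥ 3C, one has, for every t₁ ≥ 3C, |∫_{3C}^{t₁} (e^{−(iλt + F(t))} − e^{\overline{iλt + F(t)}}) dt| ≤ C₂. -/
/-!
Write `E(t) = e^{-iλt}`, so that the integrand is `E(t) (e^{-F} - e^{\bar F})`. Expanding the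
exponentials to first order, `e^{-F} - e^{\bar F} = -2 Re F + O(|F|²)`, and `F = a/t + O(1/t²)`
turns this into `-2 Re(a) E(t)/t + O(1/t²)`. The `O(1/t²)` part integrates to `O(1/(3C))`,
and one integration by parts bounds the oscillatory integral `∫ E(t)/t dt` by `3/(3Cλ)`.
-/

open intervalIntegral MeasureTheory Complex Set ComplexConjugate

theorem norm_integral_le_of_norm_le_div_sq {E : Type*} [NormedAddCommGroup E] [NormedSpace ℝ E]
    {f : ℝ → E} {K b t₁ : ℝ} (hK : 0 ≤ K) (hb : 0 < b) (hbt : b ≤ t₁)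
    (hf : ∀ t ∈ Ioc b t₁, ‖f t‖ ≤ K / t ^ 2) :
    ‖∫ t in b..t₁, f t‖ ≤ K / b := by
  have hpos : ∀ t ∈ uIcc b t₁, 0 < t := fun t ht ↦
    hb.trans_le (uIcc_of_le hbt ▸ ht).1
  have hderiv : ∀ t ∈ uIcc b t₁, HasDerivAt (fun t ↦ -K / t) (K / t ^ 2) t := fun t ht ↦ by
    simpa [div_eq_mul_inv] using (hasDerivAt_inv (hpos t ht).ne').const_mul (-K)
  have hint : IntervalIntegrable (fun t ↦ K / t ^ 2) volume b t₁ :=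
    ContinuousOn.intervalIntegrable <|
      continuousOn_const.div (continuousOn_pow 2) fun t ht ↦ pow_ne_zero 2 (hpos t ht).ne'
  calc ‖∫ t in b..t₁, f t‖ ≤ ∫ t in b..t₁, K / t ^ 2 :=
        norm_integral_le_of_norm_le hbt (ae_of_all _ hf) hint
    _ = K / b - K / t₁ := by rw [integral_eq_sub_of_hasDerivAt hderiv hint]; ring
    _ ≤ K / b := by linarith [div_nonneg hK (hb.trans_le hbt).le]

theorem norm_exp_neg_I_mul (lam t : ℝ) : ‖exp (-(I * lam * t))‖ = 1 := by
  rw [norm_exp]; simp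

theorem norm_integral_inv_mul_exp_neg_I_mul_le {lam b t₁ : ℝ} (hlam : lam ≠ 0) (hb : 0 < b)
    (hbt : b ≤ t₁) :
    ‖∫ t in b..t₁, (t : ℂ)⁻¹ * exp (-(I * lam * t))‖ ≤ 3 / (b * |lam|) := by
  set v : ℝ → ℂ := fun t ↦ exp (-(I * lam * t)) * (I / lam)
  have hv_norm (t : ℝ) : ‖v t‖ = |lam|⁻¹ := by
    simp [v, norm_exp_neg_I_mul]
  have hpos : ∀ t ∈ uIcc b t₁, 0 < t := fun t ht ↦ hb.trans_le (uIcc_of_le hbt ▸ ht).1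
  have hu : ∀ t ∈ uIcc b t₁, HasDerivAt (fun t : ℝ ↦ (t : ℂ)⁻¹) (-((t : ℂ) ^ 2)⁻¹) t :=
    fun t ht ↦ (hasDerivAt_inv (ofReal_ne_zero.2 (hpos t ht).ne')).comp_ofReal
  have hv (t : ℝ) : HasDerivAt v (exp (-(I * lam * t))) t := by
    have := (((hasDerivAt_id (t : ℂ)).const_mul (-(I * lam))).cexp.mul_const
      (I / lam)).comp_ofReal
    convert this using 1
    · ext s; simp [v]
    · have : (lam : ℂ) ≠ 0 := ofReal_ne_zero.2 hlam
      simp only [id, mul_one]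
      field_simp
      rw [I_sq, neg_neg]
  have hu'_int : IntervalIntegrable (fun t : ℝ ↦ -((t : ℂ) ^ 2)⁻¹) volume b t₁ :=
    ContinuousOn.intervalIntegrable <| (ContinuousOn.inv₀ (by fun_prop) fun t ht ↦
      pow_ne_zero 2 (ofReal_ne_zero.2 (hpos t ht).ne')).neg
  have hv'_int : IntervalIntegrable (fun t : ℝ ↦ exp (-(I * lam * t))) volume b t₁ :=
    (by fun_prop : Continuous fun t : ℝ ↦ exp (-(I * lam * t))).intervalIntegrable _ _
  have hboundary : ∀ t, b ≤ t → ‖(t : ℂ)⁻¹ * v t‖ ≤ |lam|⁻¹ / b := fun t ht ↦ by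
    rw [norm_mul, hv_norm, norm_inv, norm_real, Real.norm_of_nonneg (hb.trans_le ht).le,
      inv_mul_eq_div]
    gcongr
  have hremainder : ‖∫ t in b..t₁, -((t : ℂ) ^ 2)⁻¹ * v t‖ ≤ |lam|⁻¹ / b :=
    norm_integral_le_of_norm_le_div_sq (by positivity) hb hbt fun t _ ↦ by
      rw [norm_mul, hv_norm, norm_neg, norm_inv, norm_pow, norm_real, Real.norm_eq_abs, sq_abs,
        inv_mul_eq_div]
  rw [integral_mul_deriv_eq_deriv_mul hu (fun t _ ↦ hv t) hu'_int hv'_int]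
  calc _ ≤ ‖(t₁ : ℂ)⁻¹ * v t₁‖ + ‖(b : ℂ)⁻¹ * v b‖ + ‖∫ t in b..t₁, -((t : ℂ) ^ 2)⁻¹ * v t‖ :=
        (norm_sub_le _ _).trans (add_le_add_left (norm_sub_le _ _) _)
    _ ≤ |lam|⁻¹ / b + |lam|⁻¹ / b + |lam|⁻¹ / b := by
        gcongr
        exacts [hboundary t₁ hbt, hboundary b le_rfl]
    _ = 3 / (b * |lam|) := by field_simp; ring

theorem exp_neg_sub_exp_conj_I_mul_add (lam t : ℝ) (w : ℂ) :
    exp (-(I * lam * t + w)) - exp (conj (I * lam * t + w)) =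
      exp (-(I * lam * t)) * (exp (-w) - exp (conj w)) := by
  have hconj : conj (I * lam * t + w) = -(I * lam * t) + conj w := by simp
  rw [hconj, neg_add, exp_add, exp_add]
  ring

theorem norm_exp_neg_sub_exp_conj_add_two_re_le {z : ℂ} (hz : ‖z‖ ≤ 1) :
    ‖exp (-z) - exp (conj z) + 2 * z.re‖ ≤ 2 * ‖z‖ ^ 2 := by
  have hsplit : exp (-z) - exp (conj z) + 2 * z.re =
      (exp (-z) - 1 - -z) - (exp (conj z) - 1 - conj z) := by
    rw [re_eq_add_conj]; ring
  have hneg := norm_exp_sub_one_sub_id_le (x := -z) (by rwa [norm_neg])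
  have hconj := norm_exp_sub_one_sub_id_le (x := conj z) (by rwa [norm_conj])
  rw [norm_neg] at hneg
  rw [norm_conj] at hconj
  rw [hsplit]
  linarith [norm_sub_le (exp (-z) - 1 - -z) (exp (conj z) - 1 - conj z)]

theorem norm_exp_neg_sub_exp_conj_add_two_re_div_le {w a : ℂ} {C₀ t : ℝ} (ht : 1 ≤ t)
    (hw : ‖w‖ ≤ 1) (ha : ‖a‖ ≤ C₀) (hwa : ‖w - a / t‖ ≤ C₀ / t ^ 2) :
    ‖exp (-w) - exp (conj w) + 2 * a.re / t‖ ≤ (8 * C₀ ^ 2 + 2 * C₀) / t ^ 2 := by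
  have ht0 : 0 < t := one_pos.trans_le ht
  have hC₀ : 0 ≤ C₀ := (norm_nonneg a).trans ha
  have hw_le : ‖w‖ ≤ 2 * C₀ / t :=
    calc ‖w‖ ≤ ‖a / t‖ + ‖w - a / t‖ := norm_le_insert' w (a / t)
      _ ≤ C₀ / t + C₀ / t ^ 2 := by
        rw [norm_div, norm_real, Real.norm_of_nonneg ht0.le]
        gcongr
      _ ≤ C₀ / t + C₀ / t := by gcongr; nlinarith
      _ = 2 * C₀ / t := by ring
  have hsplit : exp (-w) - exp (conj w) + 2 * a.re / t =
      (exp (-w) - exp (conj w) + 2 * w.re) - 2 * (w - a / t).re := by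
    rw [sub_re, div_ofReal_re]; push_cast; ring
  calc _ ≤ 2 * ‖w‖ ^ 2 + 2 * (C₀ / t ^ 2) := by
        rw [hsplit]
        refine (norm_sub_le _ _).trans (add_le_add (norm_exp_neg_sub_exp_conj_add_two_re_le hw) ?_)
        rw [norm_mul, Complex.norm_two, norm_real, Real.norm_eq_abs]
        gcongr
        exact (abs_re_le_norm _).trans hwa
    _ ≤ 2 * (2 * C₀ / t) ^ 2 + 2 * (C₀ / t ^ 2) := by gcongr
    _ = (8 * C₀ ^ 2 + 2 * C₀) / t ^ 2 := by ring

theorem norm_integral_exp_neg_sub_exp_conj_le {lam b t₁ C₀ : ℝ} {F : ℝ → ℂ} {a : ℂ}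
    (hlam : lam ≠ 0) (hb : 1 ≤ b) (hbt : b ≤ t₁) (hF : Continuous F) (ha : ‖a‖ ≤ C₀)
    (hF_small : ∀ t, b ≤ t → ‖F t‖ ≤ 1) (hF_asymp : ∀ t, b ≤ t → ‖F t - a / t‖ ≤ C₀ / t ^ 2) :
    ‖∫ t in b..t₁, (exp (-(I * lam * t + F t)) - exp (conj (I * lam * t + F t)))‖ ≤
      2 * C₀ * (3 / (b * |lam|)) + (8 * C₀ ^ 2 + 2 * C₀) / b := by
  have hb₀ : 0 < b := one_pos.trans_le hb
  have hC₀ : 0 ≤ C₀ := (norm_nonneg a).trans ha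
  set c : ℂ := -2 * a.re
  set E : ℝ → ℂ := fun t ↦ exp (-(I * lam * t))
  set G : ℝ → ℂ := fun t ↦ exp (-(I * lam * t + F t)) - exp (conj (I * lam * t + F t))
  have hG_int : IntervalIntegrable G volume b t₁ :=
    (by fun_prop : Continuous G).intervalIntegrable _ _
  have hosc_int : IntervalIntegrable (fun t : ℝ ↦ (t : ℂ)⁻¹ * E t) volume b t₁ :=
    ContinuousOn.intervalIntegrable <| ContinuousOn.mul
      (ContinuousOn.inv₀ (by fun_prop) fun t ht ↦
        ofReal_ne_zero.2 (hb₀.trans_le (uIcc_of_le hbt ▸ ht).1).ne')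
      (by fun_prop)
  have hc : ‖c‖ ≤ 2 * C₀ := by
    rw [norm_mul, norm_neg, Complex.norm_two, norm_real, Real.norm_eq_abs]
    gcongr
    exact (abs_re_le_norm a).trans ha
  have hremainder : ‖∫ t in b..t₁, (G t - c * ((t : ℂ)⁻¹ * E t))‖ ≤
      (8 * C₀ ^ 2 + 2 * C₀) / b := by
    refine norm_integral_le_of_norm_le_div_sq (by positivity) hb₀ hbt fun t ht ↦ ?_
    have hsplit : G t - c * ((t : ℂ)⁻¹ * E t) =
        E t * (exp (-F t) - exp (conj (F t)) + 2 * a.re / t) := by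
      simp only [G, E, c, exp_neg_sub_exp_conj_I_mul_add]; ring
    rw [hsplit, norm_mul, norm_exp_neg_I_mul, one_mul]
    exact norm_exp_neg_sub_exp_conj_add_two_re_div_le (hb.trans ht.1.le)
      (hF_small t ht.1.le) ha (hF_asymp t ht.1.le)
  calc ‖∫ t in b..t₁, G t‖
      = ‖c * (∫ t in b..t₁, (t : ℂ)⁻¹ * E t) + ∫ t in b..t₁, (G t - c * ((t : ℂ)⁻¹ * E t))‖ := by
        rw [integral_sub hG_int (hosc_int.const_mul c), intervalIntegral.integral_const_mul,
          add_sub_cancel]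
    _ ≤ ‖c‖ * ‖∫ t in b..t₁, (t : ℂ)⁻¹ * E t‖ +
          ‖∫ t in b..t₁, (G t - c * ((t : ℂ)⁻¹ * E t))‖ :=
        (norm_add_le _ _).trans_eq (by rw [norm_mul])
    _ ≤ 2 * C₀ * (3 / (b * |lam|)) + (8 * C₀ ^ 2 + 2 * C₀) / b := by
        gcongr
        exact norm_integral_inv_mul_exp_neg_I_mul_le hlam hb₀ hbt

/-- Key estimate in the proof of the final lemma of Section 4.1: for `λ > 0`, `C ≥ 1`,
`C₀ > 0` there is `C₂ > 0` (depending only on `λ, C, C₀`) so that for every continuous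
`F : ℝ → ℂ` and `a ∈ ℂ` with `|a| ≤ C₀`, `|F(t)| ≤ 1/2` and `|F(t) − a/t| ≤ C₀/t²` for all
`t ≥ 3C`, one has `|∫_{3C}^{t₁} (e^{−(iλt + F(t))} − e^{conj(iλt + F(t))}) dt| ≤ C₂` for
every `t₁ ≥ 3C`. -/
theorem stmt_7 (lam C C₀ : ℝ) (hlam : 0 < lam) (hC : 1 ≤ C) (hC₀ : 0 < C₀) :
    ∃ C₂ : ℝ, 0 < C₂ ∧
      ∀ F : ℝ → ℂ, Continuous F →
        ∀ a : ℂ, ‖a‖ ≤ C₀ →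
          (∀ t : ℝ, 3 * C ≤ t →
            ‖F t‖ ≤ 1 / 2 ∧ ‖F t - a / (t : ℂ)‖ ≤ C₀ / t ^ 2) →
          ∀ t₁ : ℝ, 3 * C ≤ t₁ →
            ‖∫ t in (3 * C)..t₁,
              (Complex.exp (-(Complex.I * (lam : ℂ) * (t : ℂ) + F t)) -
                Complex.exp ((starRingEnd ℂ) (Complex.I * (lam : ℂ) * (t : ℂ) + F t)))‖ ≤
              C₂ := by
  have hC_pos : 0 < C := by linarith
  refine ⟨2 * C₀ * (3 / (3 * C * |lam|)) + (8 * C₀ ^ 2 + 2 * C₀) / (3 * C), by positivity,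
    fun F hF a ha hFa t₁ ht₁ ↦ ?_⟩
  exact norm_integral_exp_neg_sub_exp_conj_le hlam.ne' (by linarith) ht₁ hF ha
    (fun t ht ↦ (hFa t ht).1.trans (by norm_num)) (fun t ht ↦ (hFa t ht).2)
end

section
/- Let C > 0. For each i ∈ ℕ let λ_i ∈ ℝ and let F_i : ℂ → ℂ be holomorphic on {z : |z| > C} with F_i(z) → 0 as |z| → ∞; likewise let λ_∞ ∈ ℝ and F_∞ : ℂ → ℂ be holomorphic on {z : |z| > C} with F_∞(z) → 0 as |z| → ∞. Set f_i(z) = iλ_i z + F_i(z) and f_∞(z) = iλ_∞ z + F_∞(z). If f_i converges to f_∞ uniformly on the circle {z : |z| = 3C/2} as i → ∞, then λ_i → λ_∞. -/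
open Filter Metric Real Complex

/-! Write `f_i - f_∞ = i(λ_i - λ_∞) z + G(z)` with `G = F_i - F_∞` holomorphic on `{|z| > C}` and
bounded near infinity. By Cauchy's theorem on annuli, `∮_{|z| = r} G(z)/z² dz` does not depend on
`r > C`, and it is `O(1/r)`, so it vanishes. Hence `∮_{|z| = 3C/2} (f_i - f_∞)(z)/z² dz
= -2π(λ_i - λ_∞)`, and the standard estimate of a circle integral gives
`|λ_i - λ_∞| ≤ sup_{|z| = 3C/2} |f_i - f_∞| / (3C/2) → 0`. -/

section

variable {C r : ℝ} {H : ℂ → ℂ}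

lemma circleIntegral_eq_of_differentiableOn_norm_gt {g : ℂ → ℂ}
    (hg : DifferentiableOn ℂ g {z : ℂ | C < ‖z‖}) (hC : 0 ≤ C) (hr : C < r) {R : ℝ}
    (hrR : r ≤ R) : (∮ z in C(0, R), g z) = ∮ z in C(0, r), g z := by
  have hsub : closedBall (0 : ℂ) R \ ball 0 r ⊆ {z : ℂ | C < ‖z‖} := fun z hz =>
    hr.trans_le (by simpa using hz.2)
  refine Complex.circleIntegral_eq_of_differentiable_on_annulus_off_countable (hC.trans_lt hr)
    hrR Set.countable_empty (hg.continuousOn.mono hsub) fun z hz => hg.differentiableAt ?_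
  exact (isOpen_lt continuous_const continuous_norm).mem_nhds
    (hsub ⟨ball_subset_closedBall hz.1.1, fun h => hz.1.2 (ball_subset_closedBall h)⟩)

lemma differentiableOn_div_sq (hH : DifferentiableOn ℂ H {z : ℂ | C < ‖z‖}) (hC : 0 ≤ C) :
    DifferentiableOn ℂ (fun z => H z / z ^ 2) {z : ℂ | C < ‖z‖} :=
  hH.div (differentiableOn_id.pow 2) fun _ hz => pow_ne_zero 2 (norm_pos_iff.1 (hC.trans_lt hz))

lemma norm_circleIntegral_div_sq_le {f : ℂ → ℂ} {M : ℝ} (hr : 0 < r)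
    (hf : ∀ z : ℂ, ‖z‖ = r → ‖f z‖ ≤ M) :
    ‖∮ z in C(0, r), f z / z ^ 2‖ ≤ 2 * π * M / r :=
  calc ‖∮ z in C(0, r), f z / z ^ 2‖ ≤ 2 * π * r * (M / r ^ 2) :=
        circleIntegral.norm_integral_le_of_norm_le_const hr.le fun z hz => by
          rw [mem_sphere_zero_iff_norm] at hz
          rw [norm_div, norm_pow, hz]
          exact div_le_div_of_nonneg_right (hf z hz) (by positivity)
    _ = 2 * π * M / r := by field_simp

lemma circleIntegral_div_sq_eq_zero (hH : DifferentiableOn ℂ H {z : ℂ | C < ‖z‖})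
    (hbdd : IsBoundedUnder (· ≤ ·) (comap (fun z : ℂ => ‖z‖) atTop) fun z => ‖H z‖)
    (hC : 0 ≤ C) (hr : C < r) :
    (∮ z in C(0, r), H z / z ^ 2) = 0 := by
  obtain ⟨B, hB⟩ := hbdd
  obtain ⟨R₀, hR₀⟩ := eventually_atTop.1 (eventually_comap.1 (eventually_map.1 hB))
  have hsmall : ∀ᶠ R in atTop, ‖∮ z in C(0, r), H z / z ^ 2‖ ≤ 2 * π * B / R := by
    filter_upwards [eventually_ge_atTop (max r R₀)] with R hR
    rw [← circleIntegral_eq_of_differentiableOn_norm_gt (differentiableOn_div_sq hH hC) hC hr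
      (le_of_max_le_left hR)]
    exact norm_circleIntegral_div_sq_le ((hC.trans_lt hr).trans_le (le_of_max_le_left hR))
      (hR₀ R (le_of_max_le_right hR))
  exact norm_le_zero_iff.1 (ge_of_tendsto (tendsto_const_nhds.div_atTop tendsto_id) hsmall)

lemma circleIntegral_mul_add_div_sq (hH : DifferentiableOn ℂ H {z : ℂ | C < ‖z‖})
    (hbdd : IsBoundedUnder (· ≤ ·) (comap (fun z : ℂ => ‖z‖) atTop) fun z => ‖H z‖)
    (hC : 0 ≤ C) (hr : C < r) (a : ℂ) :
    (∮ z in C(0, r), (a * z + H z) / z ^ 2) = 2 * π * I * a := by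
  have hr0 : 0 < r := hC.trans_lt hr
  have hsphere : sphere (0 : ℂ) r ⊆ {z : ℂ | C < ‖z‖} := fun z hz => by
    rwa [Set.mem_ofPred_eq, mem_sphere_zero_iff_norm.1 hz]
  have hinv : CircleIntegrable (fun z : ℂ => a * z⁻¹) 0 r :=
    (continuousOn_const.mul (continuousOn_id.inv₀ fun z hz => ne_zero_of_mem_sphere hr0.ne' ⟨z, hz⟩)
      ).circleIntegrable hr0.le
  have hG : CircleIntegrable (fun z => H z / z ^ 2) 0 r :=
    ((differentiableOn_div_sq hH hC).continuousOn.mono hsphere).circleIntegrable hr0.le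
  calc (∮ z in C(0, r), (a * z + H z) / z ^ 2) = ∮ z in C(0, r), (a * z⁻¹ + H z / z ^ 2) :=
        circleIntegral.integral_congr hr0.le fun z hz => by
          field_simp [ne_zero_of_mem_sphere hr0.ne' ⟨z, hz⟩]
    _ = a * (∮ z in C(0, r), (z - 0)⁻¹) + ∮ z in C(0, r), H z / z ^ 2 := by
        rw [circleIntegral.integral_add hinv hG, ← circleIntegral.integral_const_mul]
        simp_rw [sub_zero]
    _ = 2 * π * I * a := by
        rw [circleIntegral.integral_sub_inv_of_mem_ball (mem_ball_self hr0),
          circleIntegral_div_sq_eq_zero hH hbdd hC hr]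
        ring

lemma abs_le_of_norm_le_on_circle (hH : DifferentiableOn ℂ H {z : ℂ | C < ‖z‖})
    (hbdd : IsBoundedUnder (· ≤ ·) (comap (fun z : ℂ => ‖z‖) atTop) fun z => ‖H z‖)
    (hC : 0 ≤ C) (hr : C < r) {lam M : ℝ}
    (hM : ∀ z : ℂ, ‖z‖ = r → ‖I * lam * z + H z‖ ≤ M) :
    |lam| ≤ M / r := by
  have h := norm_circleIntegral_div_sq_le (hC.trans_lt hr) hM
  rw [circleIntegral_mul_add_div_sq hH hbdd hC hr] at h
  have hnorm : ‖2 * π * I * (I * lam)‖ = 2 * π * |lam| := by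
    simp [abs_of_pos pi_pos, mul_assoc]
  rw [hnorm, mul_div_assoc] at h
  exact le_of_mul_le_mul_left h (by positivity)

end

/-- Deduction in Section 4.1: if `f_i(z) = iλ_i z + F_i(z)` with `F_i` holomorphic on
`{|z| > C}` vanishing at infinity (and likewise for the limit data), and `f_i → f_∞`
uniformly on the circle `{|z| = 3C/2}`, then `λ_i → λ_∞`. -/
theorem stmt_8 (C : ℝ) (hC : 0 < C) (lam : ℕ → ℝ) (F : ℕ → ℂ → ℂ)
    (laminf : ℝ) (Finf : ℂ → ℂ)
    (hF : ∀ i, DifferentiableOn ℂ (F i) {z : ℂ | C < ‖z‖})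
    (hF0 : ∀ i, Tendsto (F i) (comap (fun z : ℂ => ‖z‖) atTop) (nhds 0))
    (hFinf : DifferentiableOn ℂ Finf {z : ℂ | C < ‖z‖})
    (hFinf0 : Tendsto Finf (comap (fun z : ℂ => ‖z‖) atTop) (nhds 0))
    (hconv : TendstoUniformlyOn (fun i z => Complex.I * (lam i : ℂ) * z + F i z)
      (fun z => Complex.I * (laminf : ℂ) * z + Finf z) atTop
      {z : ℂ | ‖z‖ = 3 * C / 2}) :
    Tendsto lam atTop (nhds laminf) := by
  have hr : C < 3 * C / 2 := by linarith
  refine nhds_basis_closedBall.tendsto_right_iff.2 fun ε hε => ?_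
  filter_upwards [tendstoUniformlyOn_iff.1 hconv (ε * (3 * C / 2)) (by positivity)] with i hi
  have hdiff_bdd : IsBoundedUnder (· ≤ ·) (comap (fun z : ℂ => ‖z‖) atTop)
      fun z => ‖F i z - Finf z‖ := by
    simpa using ((hF0 i).sub hFinf0).norm.isBoundedUnder_le
  have hdiff_le : ∀ z : ℂ, ‖z‖ = 3 * C / 2 →
      ‖I * ((lam i - laminf : ℝ) : ℂ) * z + (F i z - Finf z)‖ ≤ ε * (3 * C / 2) := fun z hz =>
    calc _ = ‖(I * lam i * z + F i z) - (I * laminf * z + Finf z)‖ := by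
          rw [ofReal_sub]; ring_nf
      _ ≤ ε * (3 * C / 2) := by
          rw [← dist_eq_norm, dist_comm]; exact (hi z hz).le
  have h := abs_le_of_norm_le_on_circle ((hF i).sub hFinf) hdiff_bdd hC.le hr hdiff_le
  rwa [mul_div_cancel_right₀ _ (by positivity), ← Real.dist_eq] at h
end

section
/- Let a, b ∈ ℝ³, let ε > 0, and let γ : [0,1] → ℝ³ be a continuous path with γ(0) = a, γ(1) = b, whose length (total variation) is at most |a − b| + ε. Then the Hausdorff distance between the image γ([0,1]) and the closed segment [a, b] = {(1−s)a + s b : s ∈ [0,1]} is at most √(ε(|a − b| + ε)). -/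
/-!
Every point `p = γ t` lies in the ellipsoid `dist p a + dist p b ≤ dist a b + ε`, since the
length of `γ` bounds the length of the polygon `a, γ t, b`. By Stewart's theorem, the point of
`[a, b]` on the same level set of `p ↦ dist p a - dist p b` as `p` lies within
`√(ε (dist a b + ε))` of `p`. Conversely, by the intermediate value theorem the curve meets every
such level set, so each point of `[a, b]` is equally close to a point of the curve.
-/

open Set Metric AffineMap

section Ellipsoid

variable {E : Type*} [NormedAddCommGroup E] [InnerProductSpace ℝ E]

theorem dist_lineMap_sq (p a b : E) (u : ℝ) :
    dist p (lineMap a b u) ^ 2 =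
      (1 - u) * dist p a ^ 2 + u * dist p b ^ 2 - u * (1 - u) * dist a b ^ 2 := by
  have hpu : p - (u • (b - a) + a) = (p - a) - u • (b - a) := by abel
  have hpb : p - b = (p - a) - (b - a) := by abel
  rw [dist_eq_norm, dist_eq_norm, dist_eq_norm, dist_eq_norm, lineMap_apply_module', hpu, hpb,
    norm_sub_sq_real (p - a), norm_sub_sq_real (p - a), real_inner_smul_right, norm_smul, norm_sub_rev a b,
    Real.norm_eq_abs, mul_pow, sq_abs]
  ring

theorem dist_lineMap_le_of_dist_add_dist_le {p a b : E} {ε u : ℝ}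
    (hsum : dist p a + dist p b ≤ dist a b + ε)
    (hdiff : dist p a - dist p b = (2 * u - 1) * dist a b) :
    dist p (lineMap a b u) ≤ √(ε * (dist a b + ε)) := by
  set x := dist p a
  set y := dist p b
  set L := dist a b
  have htri : L ≤ x + y := dist_triangle_left a b p
  have hL : 0 ≤ L := dist_nonneg
  have hε : 0 ≤ ε := by linarith
  apply Real.le_sqrt_of_sq_le
  calc dist p (lineMap a b u) ^ 2
      = ((x + y) ^ 2 - L ^ 2) / 4 - (2 * u - 1) ^ 2 * L * (x + y - L) / 2 := by
        rw [dist_lineMap_sq]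
        linear_combination ((x - y + (2 * u - 1) * L) / 4 - (2 * u - 1) * (x + y) / 2) * hdiff
    _ ≤ ((L + ε) ^ 2 - L ^ 2) / 4 := by
        have hsq : (x + y) ^ 2 ≤ (L + ε) ^ 2 := pow_le_pow_left₀ (by linarith) hsum 2
        have hL' : 0 ≤ x + y - L := sub_nonneg.2 htri
        have : 0 ≤ (2 * u - 1) ^ 2 * L * (x + y - L) / 2 := by positivity
        linarith
    _ ≤ ε * (L + ε) := by nlinarith [mul_nonneg hε hL, mul_nonneg hε hε]

theorem exists_mem_segment_dist_le_of_dist_add_dist_le {p a b : E} {ε : ℝ}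
    (hsum : dist p a + dist p b ≤ dist a b + ε) :
    ∃ q ∈ segment ℝ a b, dist p q ≤ √(ε * (dist a b + ε)) := by
  have hr : dist p a - dist p b ∈ segment ℝ (-dist a b) (dist a b) := by
    rw [segment_eq_Icc (by linarith [dist_nonneg (x := a) (y := b)])]
    constructor <;> linarith [dist_triangle p a b, dist_triangle p b a, dist_comm a b]
  obtain ⟨s, u, hs, hu, hsu, hdiff⟩ := hr
  refine ⟨lineMap a b u, ?_, dist_lineMap_le_of_dist_add_dist_le hsum ?_⟩
  · rw [segment_eq_image_lineMap]
    exact mem_image_of_mem _ ⟨hu, by linarith⟩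
  · simp only [smul_eq_mul] at hdiff
    linear_combination -hdiff - dist a b * hsu

end Ellipsoid

theorem dist_add_dist_le_of_eVariationOn_le {α F : Type*} [LinearOrder α] [PseudoMetricSpace F]
    {f : α → F} {a t b : α} (hat : a ≤ t) (htb : t ≤ b) {C : ℝ} (hC : 0 ≤ C)
    (hf : eVariationOn f (Icc a b) ≤ ENNReal.ofReal C) :
    dist (f a) (f t) + dist (f t) (f b) ≤ C := by
  have hsplit := eVariationOn.Icc_add_Icc f (s := univ) hat htb (mem_univ t)
  simp only [univ_inter] at hsplit
  have hpoly : edist (f a) (f t) + edist (f t) (f b) ≤ ENNReal.ofReal C :=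
    calc edist (f a) (f t) + edist (f t) (f b)
        ≤ eVariationOn f (Icc a t) + eVariationOn f (Icc t b) :=
          add_le_add (eVariationOn.edist_le f (left_mem_Icc.2 hat) (right_mem_Icc.2 hat))
            (eVariationOn.edist_le f (left_mem_Icc.2 htb) (right_mem_Icc.2 htb))
      _ = eVariationOn f (Icc a b) := hsplit
      _ ≤ ENNReal.ofReal C := hf
  rwa [edist_dist, edist_dist, ← ENNReal.ofReal_add dist_nonneg dist_nonneg,
    ENNReal.ofReal_le_ofReal_iff hC] at hpoly

theorem exists_dist_sub_dist_eq_of_continuousOn {F : Type*} [PseudoMetricSpace F] {γ : ℝ → F}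
    {c d : ℝ} (hcd : c ≤ d) (hγ : ContinuousOn γ (Icc c d)) {r : ℝ}
    (hr : |r| ≤ dist (γ c) (γ d)) :
    ∃ t ∈ Icc c d, dist (γ t) (γ c) - dist (γ t) (γ d) = r := by
  have hcont : ContinuousOn (fun t => dist (γ t) (γ c) - dist (γ t) (γ d)) (Icc c d) :=
    ((continuous_id.dist continuous_const).sub
      (continuous_id.dist continuous_const)).comp_continuousOn hγ
  refine intermediate_value_Icc hcd hcont ⟨?_, ?_⟩ <;>
    simp only [dist_self, dist_comm (γ d) (γ c)] <;> linarith [abs_le.1 hr]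

/-- A nearly length-minimizing curve is Hausdorff close to the straight segment joining its
endpoints: if `γ : [0,1] → ℝ³` is continuous with `γ(0) = a`, `γ(1) = b`, and its length
(total variation) is at most `|a − b| + ε`, then the Hausdorff distance between the image of
`γ` and the segment `[a, b]` is at most `√(ε(|a − b| + ε))`. -/
theorem stmt_9 (a b : EuclideanSpace ℝ (Fin 3)) (ε : ℝ) (hε : 0 < ε)
    (γ : ℝ → EuclideanSpace ℝ (Fin 3)) (hγ : ContinuousOn γ (Set.Icc 0 1))
    (h0 : γ 0 = a) (h1 : γ 1 = b)
    (hlen : eVariationOn γ (Set.Icc 0 1) ≤ ENNReal.ofReal (dist a b + ε)) :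
    Metric.hausdorffDist (γ '' Set.Icc 0 1) (segment ℝ a b) ≤
      Real.sqrt (ε * (dist a b + ε)) := by
  have hsum : ∀ t ∈ Icc (0 : ℝ) 1, dist (γ t) a + dist (γ t) b ≤ dist a b + ε := by
    intro t ht
    have := dist_add_dist_le_of_eVariationOn_le ht.1 ht.2 (by positivity) hlen
    rwa [h0, h1, dist_comm a] at this
  refine hausdorffDist_le_of_mem_dist (Real.sqrt_nonneg _) ?_ ?_
  · rintro _ ⟨t, ht, rfl⟩
    exact exists_mem_segment_dist_le_of_dist_add_dist_le (hsum t ht)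
  · rw [segment_eq_image_lineMap]
    rintro _ ⟨u, hu, rfl⟩
    have hr : |(2 * u - 1) * dist (γ 0) (γ 1)| ≤ dist (γ 0) (γ 1) := by
      rw [abs_mul, abs_of_nonneg dist_nonneg]
      exact mul_le_of_le_one_left dist_nonneg (abs_le.2 ⟨by linarith [hu.1], by linarith [hu.2]⟩)
    obtain ⟨t, ht, hdiff⟩ := exists_dist_sub_dist_eq_of_continuousOn zero_le_one hγ hr
    rw [h0, h1] at hdiff
    refine ⟨γ t, mem_image_of_mem γ ht, ?_⟩
    rw [dist_comm]
    exact dist_lineMap_le_of_dist_add_dist_le (hsum t ht) hdiff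
end
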